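/- Let F : F_2^n → F_2^m be a quadratic function. Then the differential spectrum of F takes only the two values 0 and δ(F) (i.e., δ_F(a,b) ∈ {0, δ(F)} for all nonzero a and all b) if and only if all matrices Jlin_F(x), for nonzero x ∈ F_2^n, have the same rank. -/

import Mathlib

open Matrix

/-- `F : F_2^n → F_2^m` is quadratic: each coordinate is the evaluation of a
polynomial of total degree at most 2 (equivalently, its ANF has degree ≤ 2). -/
def IsQuadratic {n m : ℕ} (F : (Fin n → ZMod 2) → (Fin m → ZMod 2)) : Prop :=
  ∀ i : Fin m, ∃ p : MvPolynomial (Fin n) (ZMod 2),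
    p.totalDegree ≤ 2 ∧ ∀ x, F x i = MvPolynomial.eval x p

/-- Linear part of the Jacobian: entries `Δ_{e_j}F_i(x) + Δ_{e_j}F_i(0)`. -/
def Jlin {n m : ℕ} (F : (Fin n → ZMod 2) → (Fin m → ZMod 2))
    (x : Fin n → ZMod 2) : Matrix (Fin m) (Fin n) (ZMod 2) :=
  Matrix.of fun i j =>
    F (x + Pi.single j 1) i + F x i + F (Pi.single j 1) i + F 0 i

/-- DDT entry `δ_F(a,b) = #{x : F(x+a)+F(x)=b}`. -/
def ddt {n m : ℕ} (F : (Fin n → ZMod 2) → (Fin m → ZMod 2))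
    (a : Fin n → ZMod 2) (b : Fin m → ZMod 2) : ℕ :=
  (Finset.univ.filter fun x => F (x + a) + F x = b).card

/-- Differential uniformity δ(F): maximum of δ_F(a,b) over nonzero a and all b. -/
def deltaUniformity {n m : ℕ} (F : (Fin n → ZMod 2) → (Fin m → ZMod 2)) : ℕ :=
  Finset.univ.sup fun p : (Fin n → ZMod 2) × (Fin m → ZMod 2) =>
    if p.1 = 0 then 0 else ddt F p.1 p.2

/-!
A polynomial of degree at most two has additive second differences: each of its monomials is a
product of at most two coordinates. Hence, for quadratic `F`, `x ↦ F (a + x) + F a + F x + F 0` is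
additive, so `F_2`-linear, and its matrix is `Jlin F a`; thus `x ↦ F (x + a) + F x` is affine with
linear part `Jlin F a`. Each `δ_F(a, b)` is then `0` or the size `2 ^ (n - rank (Jlin F a))` of the
kernel, the latter being attained at `b = F a + F 0`. So the spectrum is two-valued exactly when
this kernel size, i.e. the rank, is the same for all `a ≠ 0`.
-/

section SecondDiff

variable {V W : Type*} [AddCommGroup V] [AddCommGroup W]

def secondDiff (f : V → W) (a x : V) : W :=
  f (a + x) - f a - f x + f 0

end SecondDiff

lemma Multiset.secondDiff_prod_map_add_right {σ R : Type*} [CommRing R] (s : Multiset σ)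
    (hs : Multiset.card s ≤ 2) (a x y : σ → R) :
    secondDiff (fun v => (s.map v).prod) a (x + y) =
      secondDiff (fun v => (s.map v).prod) a x + secondDiff (fun v => (s.map v).prod) a y := by
  interval_cases h : Multiset.card s
  · rw [Multiset.card_eq_zero.mp h]
    simp [secondDiff]
  · obtain ⟨i, rfl⟩ := Multiset.card_eq_one.mp h
    simp only [secondDiff, Multiset.map_singleton, Multiset.prod_singleton, Pi.add_apply,
      Pi.zero_apply]
    ring
  · obtain ⟨i, j, rfl⟩ := Multiset.card_eq_two.mp h
    simp only [secondDiff, Multiset.insert_eq_cons, Multiset.map_cons, Multiset.map_singleton,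
      Multiset.prod_cons, Multiset.prod_singleton, Pi.add_apply, Pi.zero_apply]
    ring

lemma MvPolynomial.eval_monomial_eq_prod_map_toMultiset {σ R : Type*} [CommRing R]
    (d : σ →₀ ℕ) (c : R) (v : σ → R) :
    eval v (monomial d c) = c * (d.toMultiset.map v).prod := by
  rw [eval_monomial, Finsupp.toMultiset_map, Finsupp.prod_toMultiset,
    Finsupp.prod_mapDomain_index (fun _ => pow_zero _) (fun _ _ _ => pow_add _ _ _)]

lemma MvPolynomial.secondDiff_eval_add_right {σ R : Type*} [CommRing R] (p : MvPolynomial σ R)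
    (hp : p.totalDegree ≤ 2) (a x y : σ → R) :
    secondDiff (fun v => eval v p) a (x + y) =
      secondDiff (fun v => eval v p) a x + secondDiff (fun v => eval v p) a y := by
  have hdecomp : ∀ z : σ → R, secondDiff (fun v => eval v p) a z =
      ∑ d ∈ p.support, p.coeff d * secondDiff (fun v => (d.toMultiset.map v).prod) a z := by
    intro z
    conv_lhs => rw [p.as_sum]
    simp only [secondDiff, map_sum, eval_monomial_eq_prod_map_toMultiset, mul_add, mul_sub,
      Finset.sum_add_distrib, Finset.sum_sub_distrib]
  rw [hdecomp, hdecomp, hdecomp, ← Finset.sum_add_distrib]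
  refine Finset.sum_congr rfl fun d hd => ?_
  have hcard : Multiset.card d.toMultiset ≤ 2 := by
    rw [Finsupp.card_toMultiset]
    exact (le_totalDegree hd).trans hp
  rw [Multiset.secondDiff_prod_map_add_right _ hcard, mul_add]

section FiniteField

variable {K ι κ : Type*} [Field K] [Fintype K] [DecidableEq K] [Fintype ι] [DecidableEq ι]
  [Fintype κ]

lemma Matrix.card_mulVec_eq_zero (M : Matrix κ ι K) :
    (Finset.univ.filter fun x => M *ᵥ x = 0).card =
      Fintype.card K ^ (Fintype.card ι - M.rank) := by
  classical
  have hker : (Finset.univ.filter fun x => M *ᵥ x = 0).card =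
      Fintype.card (LinearMap.ker M.mulVecLin) :=
    (Fintype.card_of_subtype _ fun x => by simp [LinearMap.mem_ker]).symm
  have hrank := LinearMap.finrank_range_add_finrank_ker M.mulVecLin
  rw [Module.finrank_fintype_fun_eq_card] at hrank
  rw [hker, Module.card_eq_pow_finrank (K := K), Matrix.rank]
  congr 1
  omega

lemma Matrix.card_mulVec_eq_zero_or_eq (M : Matrix κ ι K) (c : κ → K) :
    (Finset.univ.filter fun x => M *ᵥ x = c).card = 0 ∨
      (Finset.univ.filter fun x => M *ᵥ x = c).card =
        Fintype.card K ^ (Fintype.card ι - M.rank) := by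
  by_cases hc : c ∈ Set.range M.mulVecLin
  · right
    rw [← M.card_mulVec_eq_zero]
    exact AddMonoidHom.card_fiber_eq_of_mem_range M.mulVecLin hc ⟨0, map_zero _⟩
  · left
    exact Finset.card_eq_zero.mpr (Finset.filter_eq_empty_iff.mpr fun x _ hx => hc ⟨x, hx⟩)

end FiniteField

section Differential

variable {n m : ℕ} (F : (Fin n → ZMod 2) → (Fin m → ZMod 2))

lemma ddt_le_deltaUniformity {a : Fin n → ZMod 2} (ha : a ≠ 0) (b : Fin m → ZMod 2) :
    ddt F a b ≤ deltaUniformity F := by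
  simpa [deltaUniformity, ha] using
    Finset.le_sup (f := fun p : (Fin n → ZMod 2) × (Fin m → ZMod 2) =>
      if p.1 = 0 then 0 else ddt F p.1 p.2) (Finset.mem_univ (a, b))

lemma deltaUniformity_le {k : ℕ} (h : ∀ a ≠ 0, ∀ b, ddt F a b ≤ k) :
    deltaUniformity F ≤ k :=
  Finset.sup_le fun p _ => by
    split_ifs with hp
    · exact Nat.zero_le k
    · exact h p.1 hp p.2

lemma ddt_add_apply_zero_pos (a : Fin n → ZMod 2) : 0 < ddt F a (F a + F 0) :=
  Finset.card_pos.mpr ⟨0, by simp⟩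

end Differential

namespace IsQuadratic

variable {n m : ℕ} {F : (Fin n → ZMod 2) → (Fin m → ZMod 2)}

lemma secondDiff_add_right (hF : IsQuadratic F) (a x y : Fin n → ZMod 2) :
    secondDiff F a (x + y) = secondDiff F a x + secondDiff F a y := by
  funext i
  obtain ⟨p, hp, hpF⟩ := hF i
  simpa [secondDiff, hpF] using p.secondDiff_eval_add_right hp a x y

lemma secondDiff_eq_mulVec (hF : IsQuadratic F) (a x : Fin n → ZMod 2) :
    secondDiff F a x = Jlin F a *ᵥ x := by
  let L := (AddMonoidHom.mk' (secondDiff F a) (hF.secondDiff_add_right a)).toZModLinearMap 2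
  have hL : LinearMap.toMatrix' L = Jlin F a := by
    ext i j
    simp [L, LinearMap.toMatrix'_apply, secondDiff, Jlin, CharTwo.sub_eq_add, add_comm a]
  rw [← hL, LinearMap.toMatrix'_mulVec]
  rfl

lemma add_apply_add_eq_mulVec (hF : IsQuadratic F) (a x : Fin n → ZMod 2) :
    F (x + a) + F x = Jlin F a *ᵥ x + (F a + F 0) := by
  rw [← hF.secondDiff_eq_mulVec, secondDiff, add_comm a]
  funext i
  simp only [Pi.add_apply, Pi.sub_apply]
  grind

lemma ddt_eq_card_mulVec (hF : IsQuadratic F) (a : Fin n → ZMod 2) (b : Fin m → ZMod 2) :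
    ddt F a b = (Finset.univ.filter fun x => Jlin F a *ᵥ x = b - (F a + F 0)).card := by
  simp only [ddt, hF.add_apply_add_eq_mulVec, ← eq_sub_iff_add_eq]

lemma ddt_eq_zero_or_eq (hF : IsQuadratic F) (a : Fin n → ZMod 2) (b : Fin m → ZMod 2) :
    ddt F a b = 0 ∨ ddt F a b = 2 ^ (n - (Jlin F a).rank) := by
  simpa [hF.ddt_eq_card_mulVec] using (Jlin F a).card_mulVec_eq_zero_or_eq (b - (F a + F 0))

lemma ddt_le (hF : IsQuadratic F) (a : Fin n → ZMod 2) (b : Fin m → ZMod 2) :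
    ddt F a b ≤ 2 ^ (n - (Jlin F a).rank) := by
  rcases hF.ddt_eq_zero_or_eq a b with h | h <;> rw [h]
  exact Nat.zero_le _

lemma ddt_add_apply_zero (hF : IsQuadratic F) (a : Fin n → ZMod 2) :
    ddt F a (F a + F 0) = 2 ^ (n - (Jlin F a).rank) :=
  (hF.ddt_eq_zero_or_eq a _).resolve_left (ddt_add_apply_zero_pos F a).ne'

end IsQuadratic

theorem two_valued_spectrum_iff_constant_rank {n m : ℕ}
    (F : (Fin n → ZMod 2) → (Fin m → ZMod 2)) (hF : IsQuadratic F) :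
    (∀ a : Fin n → ZMod 2, a ≠ 0 → ∀ b : Fin m → ZMod 2,
        ddt F a b = 0 ∨ ddt F a b = deltaUniformity F) ↔
      (∀ x : Fin n → ZMod 2, x ≠ 0 → ∀ y : Fin n → ZMod 2, y ≠ 0 →
        (Jlin F x).rank = (Jlin F y).rank) := by
  constructor
  · intro h x hx y hy
    have hmax : ∀ a ≠ 0, 2 ^ (n - (Jlin F a).rank) = deltaUniformity F := fun a ha => by
      rw [← hF.ddt_add_apply_zero]
      exact (h a ha _).resolve_left (ddt_add_apply_zero_pos F a).ne'
    have hxy := Nat.pow_right_injective le_rfl ((hmax x hx).trans (hmax y hy).symm)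
    have := (Jlin F x).rank_le_width
    have := (Jlin F y).rank_le_width
    omega
  · intro h a ha b
    refine (hF.ddt_eq_zero_or_eq a b).imp_right fun hb => hb.trans (le_antisymm ?_ ?_)
    · exact hF.ddt_add_apply_zero a ▸ ddt_le_deltaUniformity F ha _
    · exact deltaUniformity_le F fun a' ha' b' => h a ha a' ha' ▸ hF.ddt_le a' b'
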